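/- arXiv:1809.04216 — 2 statements merged into one kernel-verified Lean document; each statement's English description precedes it below -/
import Mathlib

section
/- Let $(\alpha_k)_{k\geq 0}$ and $(h_k)_{k\geq 0}$ be nonnegative real sequences such that (1) $\lim_k h_k = 0$ and $\sum_k h_k = +\infty$, (2) $\sum_k \alpha_k h_k < +\infty$, and (3) there exists $c > 0$ with $|\alpha_{k+1} - \alpha_k| \leq c\, h_k$ for all $k$. Then $\lim_k \alpha_k = 0$. -/
/-!
If `α` stayed above `ε` infinitely often, then, since `∑ α k * h k < ∞` and `∑ h k = ∞` force
`α` below `ε / 2` infinitely often, `α` would cross from `ε` down to `ε / 2` infinitely often.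
The Lipschitz-type bound `|α (k+1) - α k| ≤ c * h k` makes every such crossing cost a definite
amount `(ε / 2) ^ 2 ≤ c * ∑ α h` of the series over the crossing window, contradicting the
Cauchy criterion for `∑ α k * h k`.
-/

open Filter Finset

theorem Summable.eventually_forall_sum_Ico_mem {G : Type*} [AddCommGroup G] [UniformSpace G]
    [IsUniformAddGroup G] {f : ℕ → G} (hf : Summable f) {e : Set G} (he : e ∈ nhds 0) :
    ∀ᶠ k in atTop, ∀ m, ∑ i ∈ Ico k m, f i ∈ e := by
  obtain ⟨s, hs⟩ := hf.vanishing he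
  obtain ⟨n, hsn⟩ := s.exists_nat_subset_range
  filter_upwards [eventually_ge_atTop n] with k hnk m
  refine hs _ (disjoint_left.2 fun i hi his => ?_)
  have := mem_range.1 (hsn his)
  have := (mem_Ico.1 hi).1
  omega

theorem frequently_lt_of_summable_mul {α h : ℕ → ℝ} (hh : ∀ k, 0 ≤ h k) (hhdiv : ¬ Summable h)
    (hsum : Summable fun k => α k * h k) {δ : ℝ} (hδ : 0 < δ) : ∃ᶠ k in atTop, α k < δ := by
  contrapose! hhdiv
  refine (hsum.mul_left δ⁻¹).of_norm_bounded_eventually_nat ?_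
  filter_upwards [hhdiv] with k hk
  rw [Real.norm_of_nonneg (hh k), le_inv_mul_iff₀ hδ]
  exact mul_le_mul_of_nonneg_right hk (hh k)

theorem sub_le_mul_sum_Ico_of_abs_sub_le {α h : ℕ → ℝ} {c : ℝ}
    (hdiff : ∀ k, |α (k + 1) - α k| ≤ c * h k) {k m : ℕ} (hkm : k ≤ m) :
    α k - α m ≤ c * ∑ i ∈ Ico k m, h i := by
  rw [mul_sum]
  refine (le_abs_self _).trans (dist_le_Ico_sum_of_dist_le (f := α) hkm fun _ _ => ?_)
  rw [Real.dist_eq, abs_sub_comm]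
  exact hdiff _

theorem exists_mul_le_mul_sum_Ico_of_crossing {α h : ℕ → ℝ} {c : ℝ} (hh : ∀ k, 0 ≤ h k)
    (hdiff : ∀ k, |α (k + 1) - α k| ≤ c * h k) {a b : ℝ} (ha : 0 ≤ a) (hab : a ≤ b) {k : ℕ}
    (hk : b ≤ α k) (hdown : ∃ m ≥ k, α m < a) :
    ∃ m, (b - a) * a ≤ c * ∑ i ∈ Ico k m, α i * h i := by
  classical
  -- take the first time `m` after `k` at which `α` drops below `a`
  refine ⟨Nat.find hdown, ?_⟩
  obtain ⟨hkm, hma⟩ := Nat.find_spec hdown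
  have habove : ∀ j ∈ Ico k (Nat.find hdown), a ≤ α j := fun j hj =>
    not_lt.1 fun hja => Nat.find_min hdown (mem_Ico.1 hj).2 ⟨(mem_Ico.1 hj).1, hja⟩
  set S := ∑ i ∈ Ico k (Nat.find hdown), h i
  have hdrop : b - a < c * S := by
    linarith [sub_le_mul_sum_Ico_of_abs_sub_le hdiff hkm]
  have hweight : a * S ≤ ∑ i ∈ Ico k (Nat.find hdown), α i * h i := by
    rw [mul_sum]
    exact sum_le_sum fun j hj => mul_le_mul_of_nonneg_right (habove j hj) (hh j)
  have hc : 0 ≤ c := by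
    have hS : 0 ≤ S := sum_nonneg fun j _ => hh j
    by_contra! hc
    linarith [mul_nonpos_of_nonpos_of_nonneg hc.le hS]
  calc (b - a) * a ≤ c * S * a := mul_le_mul_of_nonneg_right hdrop.le ha
    _ = c * (a * S) := by ring
    _ ≤ _ := mul_le_mul_of_nonneg_left hweight hc

theorem weakly_summable_tendsto_zero_general
    (α h : ℕ → ℝ) (hα : ∀ k, 0 ≤ α k) (hh : ∀ k, 0 ≤ h k)
    (hhdiv : ¬ Summable h)
    (hsum : Summable (fun k => α k * h k))
    (c : ℝ) (hdiff : ∀ k, |α (k + 1) - α k| ≤ c * h k) :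
    Tendsto α atTop (nhds 0) := by
  refine tendsto_order.2 ⟨fun a ha => .of_forall fun k => ha.trans_le (hα k), fun ε hε => ?_⟩
  by_contra hnot
  have hoften : ∃ᶠ k in atTop, ε ≤ α k := (not_eventually.1 hnot).mono fun _ => not_lt.1
  have hcost : ∀ᶠ x in nhds 0, c * x < (ε - ε / 2) * (ε / 2) :=
    ((continuous_const_mul c).tendsto' 0 0 (mul_zero c)).eventually
      (gt_mem_nhds (mul_pos (by linarith) (half_pos hε)))
  obtain ⟨k, hk, hsmall⟩ :=
    (hoften.and_eventually (hsum.eventually_forall_sum_Ico_mem hcost)).exists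
  have hdown : ∃ m ≥ k, α m < ε / 2 :=
    frequently_atTop.1 (frequently_lt_of_summable_mul hh hhdiv hsum (half_pos hε)) k
  obtain ⟨m, hm⟩ :=
    exists_mul_le_mul_sum_Ico_of_crossing hh hdiff (half_pos hε).le (half_le_self hε.le) hk hdown
  exact (hsmall m).not_ge hm

theorem weakly_summable_tendsto_zero
    (α h : ℕ → ℝ) (hα : ∀ k, 0 ≤ α k) (hh : ∀ k, 0 ≤ h k)
    (hh0 : Tendsto h atTop (nhds 0)) (hhdiv : ¬ Summable h)
    (hsum : Summable (fun k => α k * h k))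
    (c : ℝ) (hc : 0 < c) (hdiff : ∀ k, |α (k + 1) - α k| ≤ c * h k) :
    Tendsto α atTop (nhds 0) :=
  weakly_summable_tendsto_zero_general α h hα hh hhdiv hsum c hdiff
end

section
/- Let $a > b > 0$, $c > 0$, and $n \geq 0$ be real numbers. Then $c\, x^n b^x \leq a^x$ for all real $x \geq \max\{0,\; \frac{(2n+2)(\ln c + n\ln(\frac{2n+2}{\ln(a/b)}) - n)}{(n+2)\ln(a/b)}\}$. -/
/-!
Taking logarithms, with `L = log (a / b)` it suffices that `log c + n log x ≤ L x`. Bounding the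
concave function `log` by its tangent line at `x₀ = (2n + 2) / L` makes the left side affine in
`x` with slope `n L / (2n + 2)`, and the threshold is exactly where this affine bound meets `L x`.
-/

open Real

theorem log_le_log_add_div_sub_one {x y : ℝ} (hx : 0 < x) (hy : 0 < y) :
    log x ≤ log y + x / y - 1 := by
  have h := log_le_sub_one_of_pos (div_pos hx hy)
  rw [log_div hx.ne' hy.ne'] at h
  linarith

theorem mul_rpow_le_rpow_of_log_le {c x n r : ℝ} (hc : 0 < c) (hx : 0 < x) (hr : 0 < r)
    (h : log c + n * log x ≤ x * log r) : c * x ^ n ≤ r ^ x := by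
  rw [← log_le_log_iff (by positivity) (by positivity), log_mul hc.ne' (by positivity),
    log_rpow hx, log_rpow hr]
  exact h

theorem log_add_mul_log_le_of_tangent_threshold {c n L x : ℝ} (hn : 0 ≤ n) (hL : 0 < L)
    (hx : 0 < x)
    (h : (2 * n + 2) * (log c + n * log ((2 * n + 2) / L) - n) ≤ (n + 2) * L * x) :
    log c + n * log x ≤ x * L := by
  have hD : 0 < 2 * n + 2 := by linarith
  set t := x * L / (2 * n + 2) with ht
  have hxL : x * L = (2 * n + 2) * t := by rw [ht]; field_simp
  have tangent : log x ≤ log ((2 * n + 2) / L) + t - 1 := by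
    have := log_le_log_add_div_sub_one hx (div_pos hD hL)
    rwa [div_div_eq_mul_div] at this
  have below : log c + n * log ((2 * n + 2) / L) - n ≤ (n + 2) * t := by
    refine le_of_mul_le_mul_left ?_ hD
    linear_combination h + (n + 2) * hxL
  linarith [mul_le_mul_of_nonneg_left tangent hn]

theorem poly_times_geometric_le
    (a b c n : ℝ) (hab : a > b) (hb : b > 0) (hc : c > 0) (hn : n ≥ 0) :
    ∀ x : ℝ,
      x ≥ max 0 ((2 * n + 2) * (Real.log c + n * Real.log ((2 * n + 2) / Real.log (a / b)) - n)
            / ((n + 2) * Real.log (a / b))) →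
      c * x ^ n * b ^ x ≤ a ^ x := by
  intro x hx
  have ha : 0 < a := hb.trans hab
  have hL : 0 < log (a / b) := log_pos ((one_lt_div hb).mpr hab)
  have hT := (le_max_right _ _).trans hx
  rw [div_le_iff₀ (by positivity)] at hT
  rcases ((le_max_left _ _).trans hx).eq_or_lt with rfl | hxpos
  · rcases hn.eq_or_lt with rfl | hnpos
    · have hlogc : log c ≤ 0 := by norm_num at hT; linarith
      simpa using (log_nonpos_iff hc.le).mp hlogc
    · simp [zero_rpow hnpos.ne']
  · have hpoly : c * x ^ n ≤ (a / b) ^ x := mul_rpow_le_rpow_of_log_le hc hxpos (div_pos ha hb)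
      (log_add_mul_log_le_of_tangent_threshold hn hL hxpos (by linarith))
    calc c * x ^ n * b ^ x ≤ (a / b) ^ x * b ^ x := by gcongr
      _ = a ^ x := by rw [div_rpow ha.le hb.le, div_mul_cancel₀ _ (by positivity)]
end
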